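/- arXiv:2602.16087 — 2 statements merged into one kernel-verified Lean document; each statement's English description precedes it below -/
import Mathlib

section
/- Let R be a symmetric linear operator on a finite-dimensional real inner product space V, let ξ ∈ V and t ∈ ℝ satisfy R(I−R)X = ⟨X,ξ⟩ξ for all X, ((1−t)I − R)ξ = 0, and t(1−t) = ‖ξ‖². If ξ ≠ 0, then the eigenvalues of R are contained in {0, 1, 1−t}, and ξ is an eigenvector of R with eigenvalue 1−t. -/
theorem stmt0 {V : Type*} [NormedAddCommGroup V] [InnerProductSpace ℝ V]
    [FiniteDimensional ℝ V] (R : V →ₗ[ℝ] V) (hR : R.IsSymmetric)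
    (ξ : V) (t : ℝ)
    (h1 : ∀ X : V, R X - R (R X) = (inner ℝ X ξ : ℝ) • ξ)
    (h2 : ((1 - t) • ξ) - R ξ = 0)
    (h3 : t * (1 - t) = ‖ξ‖ ^ 2)
    (hξ : ξ ≠ 0) :
    (∀ μ : ℝ, Module.End.HasEigenvalue (R : Module.End ℝ V) μ →
      μ ∈ ({0, 1, 1 - t} : Set ℝ)) ∧
    Module.End.HasEigenvector (R : Module.End ℝ V) (1 - t) ξ := by
  have hRξ : R ξ = (1 - t) • ξ := by
    have := sub_eq_zero.mp h2
    exact this.symm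
  constructor
  · intro μ hμ
    obtain ⟨v, hv⟩ := hμ.exists_hasEigenvector
    have hv0 : v ≠ 0 := hv.right
    have hRv : R v = μ • v := hv.apply_eq_smul
    by_cases hc : (inner ℝ v ξ : ℝ) = 0
    · -- then (μ - μ²) • v = 0
      have key : (μ - μ * μ) • v = 0 := by
        have h := h1 v
        rw [hRv, map_smul, hRv, hc, zero_smul, smul_smul, ← sub_smul] at h
        exact h
      have : μ - μ * μ = 0 := by
        by_contra h
        exact hv0 (by simpa [h] using smul_eq_zero.mp key)
      have : μ * (1 - μ) = 0 := by ring_nf; linarith [this]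
      rcases mul_eq_zero.mp this with h | h
      · left; exact h
      · right; left; linarith
    · -- ⟨Rv, ξ⟩ = ⟨v, Rξ⟩
      have hsym := hR v ξ
      rw [hRv, hRξ] at hsym
      rw [inner_smul_left, inner_smul_right] at hsym
      simp only [RCLike.conj_to_real] at hsym
      have : μ = 1 - t := mul_right_cancel₀ hc hsym
      right; right; exact this
  · exact ⟨Module.End.mem_eigenspace_iff.mpr hRξ, hξ⟩
end

section
/- Let V be a finite-dimensional real inner product space, R a self-adjoint endomorphism of V with R(I−R)X = ⟨X,ξ⟩ξ for all X and ξ ≠ 0 an eigenvector of R with eigenvalue r = 1−t where t(1−t) = ‖ξ‖². Then V decomposes orthogonally as ker R ⊕ ker(I−R) ⊕ span{ξ}, provided 0 < t < 1. -/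
theorem stmt2 {V : Type*} [NormedAddCommGroup V] [InnerProductSpace ℝ V]
    [FiniteDimensional ℝ V] (R : V →ₗ[ℝ] V) (hR : R.IsSymmetric)
    (ξ : V) (t : ℝ) (hξ : ξ ≠ 0) (ht : 0 < t ∧ t < 1)
    (h1 : ∀ X : V, R X - R (R X) = (inner ℝ X ξ : ℝ) • ξ)
    (h2 : R ξ = (1 - t) • ξ)
    (h3 : t * (1 - t) = ‖ξ‖ ^ 2) :
    (LinearMap.ker R ⊔ LinearMap.ker (LinearMap.id - R) ⊔ Submodule.span ℝ {ξ} = ⊤) ∧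
    (∀ x ∈ LinearMap.ker R, ∀ y ∈ LinearMap.ker (LinearMap.id - R), (inner ℝ x y : ℝ) = 0) ∧
    (∀ x ∈ LinearMap.ker R, ∀ z ∈ Submodule.span ℝ {ξ}, (inner ℝ x z : ℝ) = 0) ∧
    (∀ y ∈ LinearMap.ker (LinearMap.id - R), ∀ z ∈ Submodule.span ℝ {ξ},
      (inner ℝ y z : ℝ) = 0) := by
  have hn0 : ‖ξ‖ ≠ 0 := norm_ne_zero_iff.mpr hξ
  have hnorm : (0:ℝ) < ‖ξ‖ ^ 2 := by positivity
  -- elements of ker R are orthogonal to ξ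
  have hkerξ : ∀ x ∈ LinearMap.ker R, (inner ℝ x ξ : ℝ) = 0 := by
    intro x hx
    have hx0 : R x = 0 := LinearMap.mem_ker.mp hx
    have := h1 x
    rw [hx0, map_zero, sub_zero] at this
    have := (smul_eq_zero.mp this.symm).resolve_right hξ
    exact this
  -- elements of ker (id - R) are orthogonal to ξ
  have hfixξ : ∀ y ∈ LinearMap.ker (LinearMap.id - R), (inner ℝ y ξ : ℝ) = 0 := by
    intro y hy
    have hy0 : R y = y := by
      have := LinearMap.mem_ker.mp hy
      simp [LinearMap.sub_apply, sub_eq_zero] at this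
      exact this.symm
    have := h1 y
    rw [hy0, hy0, sub_self] at this
    exact (smul_eq_zero.mp this.symm).resolve_right hξ
  refine ⟨?_, ?_, ?_, ?_⟩
  · rw [eq_top_iff]
    intro X _
    set c : ℝ := (inner ℝ X ξ : ℝ) / ‖ξ‖ ^ 2 with hc
    set Y : V := X - c • ξ with hY
    have hYξ : (inner ℝ Y ξ : ℝ) = 0 := by
      rw [hY, inner_sub_left, real_inner_smul_left, real_inner_self_eq_norm_sq, hc]
      field_simp
      ring
    have h1Y := h1 Y
    rw [hYξ, zero_smul] at h1Y
    have mem1 : Y - R Y ∈ LinearMap.ker R := by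
      rw [LinearMap.mem_ker, map_sub]
      exact h1Y
    have mem2 : R Y ∈ LinearMap.ker (LinearMap.id - R) := by
      rw [LinearMap.mem_ker, LinearMap.sub_apply, LinearMap.id_apply]
      rw [sub_eq_zero] at h1Y ⊢
      exact h1Y
    have mem3 : c • ξ ∈ Submodule.span ℝ {ξ} :=
      Submodule.smul_mem _ _ (Submodule.mem_span_singleton_self ξ)
    have hXeq : X = ((Y - R Y) + R Y) + c • ξ := by
      rw [hY]; abel
    rw [hXeq]
    exact Submodule.add_mem_sup (Submodule.add_mem_sup mem1 mem2) mem3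
  · intro x hx y hy
    have hy0 : R y = y := by
      have := LinearMap.mem_ker.mp hy
      simp [LinearMap.sub_apply, sub_eq_zero] at this
      exact this.symm
    have hx0 : R x = 0 := LinearMap.mem_ker.mp hx
    calc (inner ℝ x y : ℝ) = inner ℝ x (R y) := by rw [hy0]
      _ = inner ℝ (R x) y := (hR x y).symm
      _ = 0 := by rw [hx0, inner_zero_left]
  · intro x hx z hz
    obtain ⟨a, rfl⟩ := Submodule.mem_span_singleton.mp hz
    rw [real_inner_smul_right, hkerξ x hx, mul_zero]
  · intro y hy z hz
    obtain ⟨a, rfl⟩ := Submodule.mem_span_singleton.mp hz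
    rw [real_inner_smul_right, hfixξ y hy, mul_zero]
end
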